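/- arXiv:2311.16064 — 6 statements merged into one kernel-verified Lean document; each statement's English description precedes it below -/
import Mathlib

section
/- Let D = (a,b) with a < b and let (X_t)_{t∈(0,1]} be real random variables on a probability space such that for each t ∈ (0,1] the law of X_t is the centered Gaussian distribution N(0, R_t) with R_t > 0. Then for every t ∈ (0,1], (b−a) − H_D(t) = √(2R_t/π) − Err(t), where Err(t) := 2∫_{b−a}^∞ ℙ(X_t > u) du satisfies 0 < Err(t) ≤ (2 R_t^{3/2} / ((b−a)² √(2π))) · exp(−(b−a)²/(2R_t)). -/
/-!
For `X ~ 𝓝(0, v)` with tail `T u = ℙ(X > u)`, one has `ℙ(X + x ∈ (a, b)) = T (a - x) - T (b - x)`,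
and the symmetry `T (-u) = 1 - T u` turns the heat content into `|D| - 2 ∫₀^|D| T`.
With `φ` the density, `u T u - v φ u` is an antiderivative of `T` tending to `0` at infinity,
so `∫₀^|D| T` and `∫_|D|^∞ T` are explicit, and `2 v φ 0 = √(2v/π)`. The estimate of the
remainder integrates Mills' inequality `u T u ≤ v φ u`, i.e. `T u ≤ (v / |D|²) u φ u` for `u ≥ |D|`.
-/

open MeasureTheory ProbabilityTheory Filter Set Real Topology
open scoped NNReal

section SymmetricLaw

variable {μ : Measure ℝ}

noncomputable def regularHeatContent (μ : Measure ℝ) (a b : ℝ) : ℝ :=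
  ∫ x in Ioo a b, μ.real {y | y + x ∈ Ioo a b}

lemma measureReal_Ioo_eq_sub [IsFiniteMeasure μ] [NullSingletonClass μ] {c d : ℝ} (hcd : c ≤ d) :
    μ.real (Ioo c d) = μ.real (Ioi c) - μ.real (Ioi d) := by
  rw [measureReal_congr Ioo_ae_eq_Ioc, ← Ioi_sdiff_Ioi,
    measureReal_sdiff (Ioi_subset_Ioi hcd) measurableSet_Ioi]

lemma antitone_measureReal_Ioi [IsFiniteMeasure μ] : Antitone fun u ↦ μ.real (Ioi u) :=
  fun _ _ h ↦ measureReal_mono (Ioi_subset_Ioi h)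

lemma measureReal_Ioi_neg [IsProbabilityMeasure μ] [NullSingletonClass μ] [μ.IsNegInvariant]
    (u : ℝ) : μ.real (Ioi (-u)) = 1 - μ.real (Ioi u) := by
  have hneg : μ.real (Ioi (-u)) = μ.real (Iio u) := by
    rw [← neg_Iio, measureReal_def, Measure.measure_neg, ← measureReal_def]
  rw [hneg, ← compl_Ici, measureReal_compl measurableSet_Ici, probReal_univ,
    measureReal_congr Ioi_ae_eq_Ici.symm]

lemma regularHeatContent_eq_sub_intervalIntegral [IsProbabilityMeasure μ] [NullSingletonClass μ]
    [μ.IsNegInvariant] {a b : ℝ} (hab : a ≤ b) :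
    regularHeatContent μ a b = (b - a) - 2 * ∫ u in 0..b - a, μ.real (Ioi u) := by
  set T := fun u ↦ μ.real (Ioi u)
  have hT : Antitone T := antitone_measureReal_Ioi
  have hshift (x : ℝ) : μ.real {y | y + x ∈ Ioo a b} = T (a - x) - T (b - x) := by
    rw [← measureReal_Ioo_eq_sub (by linarith)]
    congr 1
    ext y
    simp only [mem_ofPred_eq, mem_Ioo]
    constructor <;> (rintro ⟨h1, h2⟩; constructor <;> linarith)
  calc regularHeatContent μ a b = ∫ x in a..b, (T (a - x) - T (b - x)) := by
        rw [regularHeatContent, intervalIntegral.integral_of_le hab,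
          ← integral_Ioc_eq_integral_Ioo]
        exact setIntegral_congr_fun measurableSet_Ioc fun x _ ↦ hshift x
    _ = (∫ u in 0..b - a, T (-u)) - ∫ u in 0..b - a, T u := by
        have hmono (c : ℝ) : Monotone fun x ↦ T (c - x) := fun x y h ↦ hT (by linarith)
        rw [intervalIntegral.integral_sub (hmono a).intervalIntegrable
          (hmono b).intervalIntegrable, intervalIntegral.integral_comp_sub_left T a,
          intervalIntegral.integral_comp_sub_left T b, intervalIntegral.integral_comp_neg]
        simp
    _ = (∫ u in 0..b - a, (1 - T u)) - ∫ u in 0..b - a, T u := by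
        simp only [T, measureReal_Ioi_neg]
    _ = (b - a) - 2 * ∫ u in 0..b - a, T u := by
        rw [intervalIntegral.integral_sub intervalIntegrable_const hT.intervalIntegrable]
        simp only [intervalIntegral.integral_const, smul_eq_mul, mul_one]
        ring

end SymmetricLaw

section GaussianTail

variable {v : ℝ≥0}

instance isNegInvariant_gaussianReal_zero : (gaussianReal 0 v).IsNegInvariant :=
  ⟨by simpa [Measure.neg] using gaussianReal_map_neg (μ := 0) (v := v)⟩

lemma gaussianPDFReal_zero_eq :
    gaussianPDFReal 0 v = fun x ↦ (√(2 * π * v))⁻¹ * rexp (-(2 * (v : ℝ))⁻¹ * x ^ 2) := by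
  simp [gaussianPDFReal_def, div_eq_inv_mul]

lemma hasDerivAt_gaussianPDFReal_zero (u : ℝ) :
    HasDerivAt (gaussianPDFReal 0 v) (-(u / v) * gaussianPDFReal 0 v u) u := by
  rcases eq_or_ne v 0 with rfl | hv
  · simp
  rw [gaussianPDFReal_zero_eq]
  refine (((hasDerivAt_pow 2 u).const_mul _).exp.const_mul _).congr_deriv ?_
  field_simp
  ring

lemma tendsto_gaussianPDFReal_zero_atTop : Tendsto (gaussianPDFReal 0 v) atTop (𝓝 0) := by
  rcases eq_or_ne v 0 with rfl | hv
  · rw [gaussianPDFReal_zero_var]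
    exact tendsto_const_nhds (x := (0 : ℝ))
  have hsq : Tendsto (fun y : ℝ ↦ -(2 * (v : ℝ))⁻¹ * y ^ 2) atTop atBot :=
    (tendsto_pow_atTop (α := ℝ) two_ne_zero).const_mul_atTop_of_neg (by simp; positivity)
  rw [gaussianPDFReal_zero_eq]
  simpa using (tendsto_exp_atBot.comp hsq).const_mul (√(2 * π * v))⁻¹

lemma integrable_mul_gaussianPDFReal_zero : Integrable fun y ↦ y * gaussianPDFReal 0 v y := by
  rcases eq_or_ne v 0 with rfl | hv
  · simp
  rw [gaussianPDFReal_zero_eq]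
  refine ((integrable_mul_exp_neg_mul_sq (b := (2 * (v : ℝ))⁻¹) (by positivity)).const_mul
    (√(2 * π * v))⁻¹).congr (ae_of_all _ fun y ↦ ?_)
  simp only
  ring

lemma integral_Ioi_mul_gaussianPDFReal_zero (u : ℝ) :
    ∫ y in Ioi u, y * gaussianPDFReal 0 v y = v * gaussianPDFReal 0 v u := by
  have hderiv (y : ℝ) : HasDerivAt (fun y ↦ -(v * gaussianPDFReal 0 v y))
      (y * gaussianPDFReal 0 v y) y := by
    rcases eq_or_ne v 0 with rfl | hv
    · simpa using hasDerivAt_const y (0 : ℝ)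
    refine ((hasDerivAt_gaussianPDFReal_zero y).const_mul (v : ℝ)).fun_neg.congr_deriv ?_
    field_simp
  have hlim : Tendsto (fun y ↦ -(v * gaussianPDFReal 0 v y)) atTop (𝓝 0) := by
    simpa using ((tendsto_gaussianPDFReal_zero_atTop (v := v)).const_mul (v : ℝ)).neg
  rw [integral_Ioi_of_hasDerivAt_of_tendsto (hderiv u).continuousAt.continuousWithinAt
    (fun y _ ↦ hderiv y) integrable_mul_gaussianPDFReal_zero.integrableOn hlim]
  ring

lemma gaussianReal_real_apply_eq_integral {m : ℝ} (hv : v ≠ 0) (s : Set ℝ) :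
    (gaussianReal m v).real s = ∫ x in s, gaussianPDFReal m v x := by
  rw [measureReal_def, gaussianReal_apply_eq_integral m hv,
    ENNReal.toReal_ofReal (integral_nonneg fun x ↦ gaussianPDFReal_nonneg m v x)]

noncomputable def gaussianTail (v : ℝ≥0) (u : ℝ) : ℝ := (gaussianReal 0 v).real (Ioi u)

lemma gaussianTail_eq_sub_intervalIntegral (hv : v ≠ 0) (u : ℝ) :
    gaussianTail v u = gaussianTail v 0 - ∫ y in 0..u, gaussianPDFReal 0 v y := by
  have hIic (c : ℝ) : ∫ y in Iic c, gaussianPDFReal 0 v y = 1 - gaussianTail v c := by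
    rw [← gaussianReal_real_apply_eq_integral hv, gaussianTail, ← compl_Iic,
      measureReal_compl measurableSet_Iic, probReal_univ]
    ring
  rw [← intervalIntegral.integral_Iic_sub_Iic (integrable_gaussianPDFReal 0 v).integrableOn
    (integrable_gaussianPDFReal 0 v).integrableOn, hIic, hIic]
  ring

lemma hasDerivAt_gaussianTail (hv : v ≠ 0) (u : ℝ) :
    HasDerivAt (gaussianTail v) (-gaussianPDFReal 0 v u) u := by
  have hcont : Continuous (gaussianPDFReal 0 v) := by
    rw [gaussianPDFReal_zero_eq]
    fun_prop
  rw [funext (gaussianTail_eq_sub_intervalIntegral hv)]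
  exact (intervalIntegral.integral_hasDerivAt_right (hcont.intervalIntegrable 0 u)
    (hcont.stronglyMeasurableAtFilter _ _) hcont.continuousAt).const_sub _

lemma gaussianTail_pos (hv : v ≠ 0) (u : ℝ) : 0 < gaussianTail v u := by
  have hvol : volume (Ioi u) ≠ 0 := by simp
  exact ENNReal.toReal_pos (fun h ↦ hvol (gaussianReal_absolutelyContinuous' 0 hv h))
    (measure_ne_top _ _)

lemma mul_gaussianTail_le (hv : v ≠ 0) (u : ℝ) :
    u * gaussianTail v u ≤ v * gaussianPDFReal 0 v u := by
  rw [gaussianTail, gaussianReal_real_apply_eq_integral hv, ← integral_const_mul,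
    ← integral_Ioi_mul_gaussianPDFReal_zero]
  refine setIntegral_mono_on ((integrable_gaussianPDFReal 0 v).integrableOn.const_mul u)
    integrable_mul_gaussianPDFReal_zero.integrableOn measurableSet_Ioi fun y hy ↦ ?_
  exact mul_le_mul_of_nonneg_right (le_of_lt hy) (gaussianPDFReal_nonneg 0 v y)

lemma hasDerivAt_mul_gaussianTail_sub (hv : v ≠ 0) (u : ℝ) :
    HasDerivAt (fun u ↦ u * gaussianTail v u - v * gaussianPDFReal 0 v u)
      (gaussianTail v u) u := by
  refine (((hasDerivAt_id' u).mul (hasDerivAt_gaussianTail hv u)).sub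
    ((hasDerivAt_gaussianPDFReal_zero u).const_mul (v : ℝ))).congr_deriv ?_
  field_simp
  ring

lemma tendsto_mul_gaussianTail_sub_atTop (hv : v ≠ 0) :
    Tendsto (fun u ↦ u * gaussianTail v u - v * gaussianPDFReal 0 v u) atTop (𝓝 0) := by
  have hpdf : Tendsto (fun u ↦ v * gaussianPDFReal 0 v u) atTop (𝓝 0) := by
    simpa using tendsto_gaussianPDFReal_zero_atTop.const_mul (v : ℝ)
  have hmul : Tendsto (fun u ↦ u * gaussianTail v u) atTop (𝓝 0) := by
    refine tendsto_of_tendsto_of_tendsto_of_le_of_le' tendsto_const_nhds hpdf ?_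
      (Eventually.of_forall (mul_gaussianTail_le hv))
    filter_upwards [eventually_ge_atTop 0] with u hu
    exact mul_nonneg hu (gaussianTail_pos hv u).le
  simpa using hmul.sub hpdf

lemma integrableOn_Ioi_gaussianTail (hv : v ≠ 0) (c : ℝ) :
    IntegrableOn (gaussianTail v) (Ioi c) :=
  integrableOn_Ioi_deriv_of_nonneg' (fun u _ ↦ hasDerivAt_mul_gaussianTail_sub hv u)
    (fun u _ ↦ (gaussianTail_pos hv u).le) (tendsto_mul_gaussianTail_sub_atTop hv)

lemma integral_Ioi_gaussianTail (hv : v ≠ 0) (c : ℝ) :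
    ∫ u in Ioi c, gaussianTail v u = v * gaussianPDFReal 0 v c - c * gaussianTail v c := by
  rw [integral_Ioi_of_hasDerivAt_of_nonneg' (fun u _ ↦ hasDerivAt_mul_gaussianTail_sub hv u)
    (fun u _ ↦ (gaussianTail_pos hv u).le) (tendsto_mul_gaussianTail_sub_atTop hv)]
  ring

lemma intervalIntegral_gaussianTail (hv : v ≠ 0) (a b : ℝ) :
    ∫ u in a..b, gaussianTail v u =
      (b * gaussianTail v b - v * gaussianPDFReal 0 v b) -
        (a * gaussianTail v a - v * gaussianPDFReal 0 v a) :=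
  intervalIntegral.integral_eq_sub_of_hasDerivAt (fun u _ ↦ hasDerivAt_mul_gaussianTail_sub hv u)
    antitone_measureReal_Ioi.intervalIntegrable

lemma regularHeatContent_gaussianReal (hv : v ≠ 0) {a b : ℝ} (hab : a ≤ b) :
    regularHeatContent (gaussianReal 0 v) a b =
      (b - a) - 2 * ∫ u in 0..b - a, gaussianTail v u :=
  have := nullSingletonClass_gaussianReal (μ := 0) hv
  regularHeatContent_eq_sub_intervalIntegral hab

lemma integral_Ioi_gaussianTail_pos (hv : v ≠ 0) (c : ℝ) :
    0 < ∫ u in Ioi c, gaussianTail v u := by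
  rw [setIntegral_pos_iff_support_of_nonneg_ae (ae_of_all _ fun u ↦ (gaussianTail_pos hv u).le)
    (integrableOn_Ioi_gaussianTail hv c),
    Function.support_eq_univ fun u ↦ (gaussianTail_pos hv u).ne', univ_inter]
  simp

lemma integral_Ioi_gaussianTail_le (hv : v ≠ 0) {c : ℝ} (hc : 0 < c) :
    ∫ u in Ioi c, gaussianTail v u ≤ v ^ 2 * gaussianPDFReal 0 v c / c ^ 2 := by
  calc ∫ u in Ioi c, gaussianTail v u
      ≤ ∫ u in Ioi c, v / c ^ 2 * (u * gaussianPDFReal 0 v u) := by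
        refine setIntegral_mono_on (integrableOn_Ioi_gaussianTail hv c)
          (integrable_mul_gaussianPDFReal_zero.integrableOn.const_mul _) measurableSet_Ioi
          fun u (hu : c < u) ↦ ?_
        have hu₀ : 0 < u := hc.trans hu
        rw [div_mul_eq_mul_div, le_div_iff₀ (by positivity)]
        calc gaussianTail v u * c ^ 2
            ≤ gaussianTail v u * u ^ 2 := by
              gcongr
              exact (gaussianTail_pos hv u).le
          _ = u * (u * gaussianTail v u) := by ring
          _ ≤ u * (v * gaussianPDFReal 0 v u) :=
              mul_le_mul_of_nonneg_left (mul_gaussianTail_le hv u) hu₀.le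
          _ = v * (u * gaussianPDFReal 0 v u) := by ring
    _ = v ^ 2 * gaussianPDFReal 0 v c / c ^ 2 := by
        rw [integral_const_mul, integral_Ioi_mul_gaussianPDFReal_zero]
        ring

lemma two_mul_mul_gaussianPDFReal_zero_zero : 2 * v * gaussianPDFReal 0 v 0 = √(2 * v / π) := by
  have hsq : 2 * (v : ℝ) / π = (2 * v) ^ 2 / (2 * π * v) := by
    rcases eq_or_ne v 0 with rfl | hv
    · simp
    field_simp
  rw [gaussianPDFReal_zero_eq, hsq, sqrt_div (by positivity), sqrt_sq (by positivity)]
  simp [div_eq_mul_inv]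

lemma sq_mul_gaussianPDFReal_zero (x : ℝ) :
    (v : ℝ) ^ 2 * gaussianPDFReal 0 v x =
      v ^ ((3 : ℝ) / 2) / √(2 * π) * rexp (-x ^ 2 / (2 * v)) := by
  have h32 : (v : ℝ) ^ ((3 : ℝ) / 2) = v * √v := by
    rw [show (3 : ℝ) / 2 = 1 + 1 / 2 by norm_num, rpow_add' v.coe_nonneg (by norm_num), rpow_one,
      sqrt_eq_rpow]
  have hsq : (v : ℝ) ^ 2 = v * √v * √v := by
    rw [mul_assoc, mul_self_sqrt v.coe_nonneg, sq]
  rw [gaussianPDFReal_def, h32, hsq, sqrt_mul (by positivity)]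
  simp only [sub_zero]
  field_simp

end GaussianTail

theorem regular_heat_content_gaussian_exact_general
    {Ω : Type*} [MeasureSpace Ω]
    (a b : ℝ) (hab : a < b) (X : ℝ → Ω → ℝ) (R : ℝ → NNReal)
    (hRpos : ∀ t ∈ Set.Ioc (0:ℝ) 1, 0 < R t)
    (hlaw : ∀ t ∈ Set.Ioc (0:ℝ) 1, Measure.map (X t) ℙ = gaussianReal 0 (R t))
    (H Err : ℝ → ℝ)
    (hH : ∀ t, H t = ∫ x in Set.Ioo a b, (ℙ {ω | X t ω + x ∈ Set.Ioo a b}).toReal)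
    (hErr : ∀ t, Err t = 2 * ∫ u in Set.Ioi (b - a), (ℙ {ω | u < X t ω}).toReal) :
    ∀ t ∈ Set.Ioc (0:ℝ) 1,
      (b - a) - H t = Real.sqrt (2 * (R t : ℝ) / Real.pi) - Err t ∧
      0 < Err t ∧
      Err t ≤ 2 * (R t : ℝ) ^ ((3:ℝ)/2) / ((b - a) ^ 2 * Real.sqrt (2 * Real.pi)) *
        Real.exp (-(b - a) ^ 2 / (2 * (R t : ℝ))) := by
  intro t ht
  have hv : R t ≠ 0 := (hRpos t ht).ne'
  have hL : 0 < b - a := sub_pos.2 hab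
  have hX : HasLaw (X t) (gaussianReal 0 (R t)) ℙ :=
    ⟨aemeasurable_of_map_neZero (by rw [hlaw t ht]; infer_instance), hlaw t ht⟩
  have hHt : H t = regularHeatContent (gaussianReal 0 (R t)) a b := by
    rw [hH t, regularHeatContent]
    exact setIntegral_congr_fun measurableSet_Ioo fun x _ ↦
      hX.measureReal_eq (measurableSet_Ioo.preimage (measurable_add_const x))
  have hErrt : Err t = 2 * ∫ u in Ioi (b - a), gaussianTail (R t) u := by
    rw [hErr t]
    exact congrArg (2 * ·) (setIntegral_congr_fun measurableSet_Ioi fun u _ ↦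
      hX.measureReal_eq measurableSet_Ioi)
  have hIoi := integral_Ioi_gaussianTail hv (b - a)
  have hIoo := intervalIntegral_gaussianTail hv 0 (b - a)
  refine ⟨?_, ?_, ?_⟩
  · rw [hHt, hErrt, regularHeatContent_gaussianReal hv hab.le, hIoo, hIoi,
      ← two_mul_mul_gaussianPDFReal_zero_zero]
    ring
  · rw [hErrt]
    linarith [integral_Ioi_gaussianTail_pos hv (b - a)]
  · calc Err t ≤ 2 * ((R t : ℝ) ^ 2 * gaussianPDFReal 0 (R t) (b - a) / (b - a) ^ 2) := by
          rw [hErrt]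
          linarith [integral_Ioi_gaussianTail_le hv hL]
      _ = _ := by
          rw [sq_mul_gaussianPDFReal_zero]
          field_simp

/-- For a family `(X_t)` with `X_t ~ N(0, R_t)`, `R_t > 0`, and
`D = (a,b)`, the regular heat content satisfies
`(b-a) - H_D(t) = √(2 R_t / π) - Err(t)` where
`Err(t) = 2 ∫_{b-a}^∞ ℙ(X_t > u) du` satisfies
`0 < Err(t) ≤ (2 R_t^{3/2} / ((b-a)² √(2π))) exp(-(b-a)²/(2R_t))`. -/
theorem regular_heat_content_gaussian_exact
    {Ω : Type*} [MeasureSpace Ω] [IsProbabilityMeasure (ℙ : Measure Ω)]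
    (a b : ℝ) (hab : a < b) (X : ℝ → Ω → ℝ) (R : ℝ → NNReal)
    (hRpos : ∀ t ∈ Set.Ioc (0:ℝ) 1, 0 < R t)
    (hlaw : ∀ t ∈ Set.Ioc (0:ℝ) 1, Measure.map (X t) ℙ = gaussianReal 0 (R t))
    (H Err : ℝ → ℝ)
    (hH : ∀ t, H t = ∫ x in Set.Ioo a b, (ℙ {ω | X t ω + x ∈ Set.Ioo a b}).toReal)
    (hErr : ∀ t, Err t = 2 * ∫ u in Set.Ioi (b - a), (ℙ {ω | u < X t ω}).toReal) :
    ∀ t ∈ Set.Ioc (0:ℝ) 1,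
      (b - a) - H t = Real.sqrt (2 * (R t : ℝ) / Real.pi) - Err t ∧
      0 < Err t ∧
      Err t ≤ 2 * (R t : ℝ) ^ ((3:ℝ)/2) / ((b - a) ^ 2 * Real.sqrt (2 * Real.pi)) *
        Real.exp (-(b - a) ^ 2 / (2 * (R t : ℝ))) :=
  regular_heat_content_gaussian_exact_general a b hab X R hRpos hlaw H Err hH hErr
end

section
/- Let D = (a,b) with a < b and let (X_t)_{t∈(0,1]} be real random variables such that for each t ∈ (0,1] the law of X_t is the centered Gaussian distribution N(0, R_t) with R_t > 0, and assume R_t → 0 as t ↓ 0. Then lim_{t↓0} ((b−a) − H_D(t)) / √(R_t) = √(2/π). -/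
/-!
If `X ~ N(0, σ²)`, the defect `1 - ℙ(X + x ∈ (a, b))` is the sum of the two
Gaussian tails `ℙ(Z ≥ (x - a)/σ)` and `ℙ(Z ≥ (b - x)/σ)` of a standard normal `Z`.
Integrating over `x ∈ (a, b)` and rescaling gives
`|D| - H_D = 2σ ∫₀^{|D|/σ} ℙ(Z ≥ w) dw`. As `σ → 0` the integral tends to
`∫₀^∞ ℙ(Z ≥ w) dw = 𝔼[Z⁺] = 1/√(2π)` by the layer cake formula, so the ratio
tends to `2/√(2π) = √(2/π)`.
-/

open MeasureTheory ProbabilityTheory Filter Set Real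
open scoped Topology

lemma setIntegral_Ioi_mul_gaussianPDFReal :
    ∫ x in Ioi (0 : ℝ), x * gaussianPDFReal 0 1 x = (√(2 * π))⁻¹ := by
  have h := integral_rpow_mul_exp_neg_mul_rpow (p := 2) (q := 1) (b := 1 / 2)
    two_pos (by norm_num) (by norm_num)
  norm_num [Real.Gamma_one] at h
  rw [← mul_one (√(2 * π))⁻¹, ← h, ← integral_const_mul]
  refine setIntegral_congr_fun measurableSet_Ioi fun x _ => ?_
  simp only [gaussianPDFReal, NNReal.coe_one]
  ring_nf

lemma integral_max_zero_gaussianReal :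
    ∫ x, max x 0 ∂gaussianReal 0 1 = (√(2 * π))⁻¹ := by
  rw [integral_gaussianReal_eq_integral_smul one_ne_zero, ← setIntegral_Ioi_mul_gaussianPDFReal,
    ← integral_indicator measurableSet_Ioi]
  congr 1 with x
  by_cases hx : 0 < x
  · simp [hx, hx.le, mul_comm]
  · simp [hx, not_lt.1 hx]

lemma setIntegral_Ioi_gaussianReal_real_Ici :
    ∫ t in Ioi (0 : ℝ), (gaussianReal 0 1).real (Ici t) = (√(2 * π))⁻¹ := by
  have hint : Integrable (fun x : ℝ => max x 0) (gaussianReal 0 1) :=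
    ((memLp_id_gaussianReal 1).integrable le_rfl).pos_part
  rw [← integral_max_zero_gaussianReal,
    hint.integral_eq_integral_meas_le (Eventually.of_forall fun x => le_max_right x 0)]
  refine setIntegral_congr_fun measurableSet_Ioi fun t ht => ?_
  congr 1 with x
  simp [not_le.2 (show (0 : ℝ) < t from ht)]

lemma tendsto_intervalIntegral_gaussianReal_real_Ici :
    Tendsto (fun s => ∫ w in 0..s, (gaussianReal 0 1).real (Ici w)) atTop
      (𝓝 (√(2 * π))⁻¹) := by
  have hint : IntegrableOn (fun w => (gaussianReal 0 1).real (Ici w)) (Ioi 0) :=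
    .of_integral_ne_zero (by rw [setIntegral_Ioi_gaussianReal_real_Ici]; positivity)
  simpa [setIntegral_Ioi_gaussianReal_real_Ici] using
    intervalIntegral_tendsto_integral_Ioi 0 hint tendsto_id

lemma sqrt_two_div_pi_eq : √(2 / π) = 2 * (√(2 * π))⁻¹ := by
  rw [← Real.sqrt_inv, ← Real.sqrt_sq zero_le_two, ← Real.sqrt_mul (sq_nonneg 2)]
  congr 1
  field_simp
  ring

lemma gaussianReal_real_Ici {v : NNReal} (hv : v ≠ 0) (u : ℝ) :
    (gaussianReal 0 v).real (Ici u) = (gaussianReal 0 1).real (Ici (u / √v)) := by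
  have hσ : 0 < √(v : ℝ) := Real.sqrt_pos.2 (by positivity)
  have hstd : (gaussianReal 0 v).map (· / √v) = gaussianReal 0 1 := by
    rw [gaussianReal_map_div_const, zero_div]
    congr 1
    ext
    simp [Real.sq_sqrt v.coe_nonneg, hv]
  rw [← hstd, map_measureReal_apply (by fun_prop) measurableSet_Ici]
  congr 1 with x
  exact (div_le_div_iff_of_pos_right hσ).symm

lemma gaussianReal_real_Iic (v : NNReal) (u : ℝ) :
    (gaussianReal 0 v).real (Iic u) = (gaussianReal 0 v).real (Ici (-u)) := by
  conv_lhs => rw [← neg_zero, ← gaussianReal_map_neg]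
  rw [map_measureReal_apply (by fun_prop) measurableSet_Iic]
  congr 1 with x
  simp

lemma measureReal_Ioo_eq_one_sub {μ : Measure ℝ} [IsProbabilityMeasure μ] {c d : ℝ}
    (hcd : c < d) : μ.real (Ioo c d) = 1 - μ.real (Iic c) - μ.real (Ici d) := by
  have hdisj : Disjoint (Iic c) (Ici d) :=
    Set.disjoint_left.2 fun x hxc hxd => (lt_of_le_of_lt hxc hcd).not_ge hxd
  have hcompl : (Ioo c d)ᶜ = Iic c ∪ Ici d := by
    ext x
    simp [or_iff_not_imp_left]
  have h := probReal_compl_eq_one_sub (μ := μ) (measurableSet_Ioo (a := c) (b := d))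
  rw [hcompl, measureReal_union hdisj measurableSet_Ici] at h
  linarith

lemma gaussianReal_real_Ioo {v : NNReal} (hv : v ≠ 0) {c d : ℝ} (hcd : c < d) :
    (gaussianReal 0 v).real (Ioo c d)
      = 1 - (gaussianReal 0 1).real (Ici (-c / √v))
        - (gaussianReal 0 1).real (Ici (d / √v)) := by
  rw [measureReal_Ioo_eq_one_sub hcd, gaussianReal_real_Iic, gaussianReal_real_Ici hv,
    gaussianReal_real_Ici hv]

lemma measureReal_add_mem_Ioo {Ω : Type*} [MeasurableSpace Ω] {P : Measure Ω} {X : Ω → ℝ}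
    (hX : AEMeasurable X P) (a b x : ℝ) :
    P.real {ω | X ω + x ∈ Ioo a b} = (P.map X).real (Ioo (a - x) (b - x)) := by
  rw [map_measureReal_apply_of_aemeasurable hX measurableSet_Ioo]
  congr 1 with ω
  simp only [mem_ofPred_eq, mem_preimage, mem_Ioo, lt_sub_iff_add_lt, sub_lt_iff_lt_add]

section IntervalIntegral

variable {E : Type*} [NormedAddCommGroup E] [NormedSpace ℝ E]

lemma intervalIntegral_comp_sub_right_div (f : ℝ → E) (a b : ℝ) {c : ℝ} (hc : c ≠ 0) :
    ∫ x in a..b, f ((x - a) / c) = c • ∫ w in 0..(b - a) / c, f w := by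
  simp [intervalIntegral.integral_comp_sub_right (fun y => f (y / c)), hc]

lemma intervalIntegral_comp_sub_left_div (f : ℝ → E) (a b : ℝ) {c : ℝ} (hc : c ≠ 0) :
    ∫ x in a..b, f ((b - x) / c) = c • ∫ w in 0..(b - a) / c, f w := by
  simp [intervalIntegral.integral_comp_sub_left (fun y => f (y / c)), hc]

end IntervalIntegral

lemma integral_Ioo_measureReal_add_mem_Ioo_of_gaussianReal {Ω : Type*} [MeasurableSpace Ω]
    {P : Measure Ω} {X : Ω → ℝ} {v : NNReal} (hv : v ≠ 0) (hX : P.map X = gaussianReal 0 v)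
    {a b : ℝ} (hab : a < b) :
    ∫ x in Ioo a b, P.real {ω | X ω + x ∈ Ioo a b}
      = (b - a) - 2 * √v * ∫ w in 0..(b - a) / √v, (gaussianReal 0 1).real (Ici w) := by
  set g : ℝ → ℝ := fun w => (gaussianReal 0 1).real (Ici w)
  have hg : Antitone g := fun u w huw => measureReal_mono (Ici_subset_Ici.2 huw)
  have hσ : √(v : ℝ) ≠ 0 := (Real.sqrt_pos.2 (by positivity)).ne'
  have hXm : AEMeasurable X P := aemeasurable_of_map_neZero (by rw [hX]; infer_instance)
  have hg₁ : IntervalIntegrable (fun x => g ((x - a) / √v)) volume a b :=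
    (hg.comp_monotone fun x y hxy => by gcongr).intervalIntegrable
  have hg₂ : IntervalIntegrable (fun x => g ((b - x) / √v)) volume a b :=
    (hg.comp fun x y hxy => by gcongr).intervalIntegrable
  calc ∫ x in Ioo a b, P.real {ω | X ω + x ∈ Ioo a b}
      = ∫ x in a..b, (1 - g ((x - a) / √v) - g ((b - x) / √v)) := by
        rw [intervalIntegral.integral_of_le hab.le, integral_Ioc_eq_integral_Ioo]
        refine setIntegral_congr_fun measurableSet_Ioo fun x _ => ?_
        rw [measureReal_add_mem_Ioo hXm, hX, gaussianReal_real_Ioo hv (by linarith), neg_sub]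
    _ = (b - a) - 2 * √v * ∫ w in 0..(b - a) / √v, g w := by
        rw [intervalIntegral.integral_sub (intervalIntegrable_const.sub hg₁) hg₂,
          intervalIntegral.integral_sub intervalIntegrable_const hg₁,
          intervalIntegral_comp_sub_right_div g a b hσ,
          intervalIntegral_comp_sub_left_div g a b hσ]
        simp only [intervalIntegral.integral_const, smul_eq_mul]
        ring

theorem regular_heat_content_gaussian_limit_general
    {Ω : Type*} [MeasureSpace Ω]
    (a b : ℝ) (hab : a < b) (X : ℝ → Ω → ℝ) (R : ℝ → NNReal)
    (hRpos : ∀ t ∈ Set.Ioc (0:ℝ) 1, 0 < R t)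
    (hlaw : ∀ t ∈ Set.Ioc (0:ℝ) 1, Measure.map (X t) ℙ = gaussianReal 0 (R t))
    (hRlim : Tendsto (fun t => (R t : ℝ)) (nhdsWithin 0 (Set.Ioc 0 1)) (nhds 0))
    (H : ℝ → ℝ)
    (hH : ∀ t, H t = ∫ x in Set.Ioo a b, (ℙ {ω | X t ω + x ∈ Set.Ioo a b}).toReal) :
    Tendsto (fun t => ((b - a) - H t) / Real.sqrt (R t))
      (nhdsWithin 0 (Set.Ioc 0 1)) (nhds (Real.sqrt (2 / Real.pi))) := by
  have hσ : Tendsto (fun t => √(R t : ℝ)) (𝓝[Ioc 0 1] 0) (𝓝[>] 0) :=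
    tendsto_nhdsWithin_iff.2 ⟨by simpa using hRlim.sqrt, eventually_mem_nhdsWithin.mono
      fun t ht => Real.sqrt_pos.2 (by exact_mod_cast hRpos t ht)⟩
  have hratio : Tendsto (fun t => (b - a) / √(R t : ℝ)) (𝓝[Ioc 0 1] 0) atTop := by
    simpa [div_eq_mul_inv] using hσ.inv_tendsto_nhdsGT_zero.const_mul_atTop (sub_pos.2 hab)
  rw [sqrt_two_div_pi_eq]
  refine ((tendsto_intervalIntegral_gaussianReal_real_Ici.comp hratio).const_mul 2).congr' ?_
  filter_upwards [eventually_mem_nhdsWithin] with t ht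
  have hσt : √(R t : ℝ) ≠ 0 := (Real.sqrt_pos.2 (by exact_mod_cast hRpos t ht)).ne'
  have hHt : ∫ x in Ioo a b, (ℙ {ω | X t ω + x ∈ Ioo a b}).toReal
      = (b - a) - 2 * √(R t : ℝ)
        * ∫ w in 0..(b - a) / √(R t : ℝ), (gaussianReal 0 1).real (Ici w) :=
    integral_Ioo_measureReal_add_mem_Ioo_of_gaussianReal (hRpos t ht).ne' (hlaw t ht) hab
  rw [Function.comp_apply, hH t, hHt, sub_sub_cancel]
  field_simp

/-- For a family `(X_t)` with `X_t ~ N(0, R_t)`, `R_t > 0`, `R_t → 0`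
as `t ↓ 0`, and `D = (a,b)`, the regular heat content satisfies
`lim_{t↓0} ((b-a) - H_D(t)) / √R_t = √(2/π)`. -/
theorem regular_heat_content_gaussian_limit
    {Ω : Type*} [MeasureSpace Ω] [IsProbabilityMeasure (ℙ : Measure Ω)]
    (a b : ℝ) (hab : a < b) (X : ℝ → Ω → ℝ) (R : ℝ → NNReal)
    (hRpos : ∀ t ∈ Set.Ioc (0:ℝ) 1, 0 < R t)
    (hlaw : ∀ t ∈ Set.Ioc (0:ℝ) 1, Measure.map (X t) ℙ = gaussianReal 0 (R t))
    (hRlim : Tendsto (fun t => (R t : ℝ)) (nhdsWithin 0 (Set.Ioc 0 1)) (nhds 0))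
    (H : ℝ → ℝ)
    (hH : ∀ t, H t = ∫ x in Set.Ioo a b, (ℙ {ω | X t ω + x ∈ Set.Ioo a b}).toReal) :
    Tendsto (fun t => ((b - a) - H t) / Real.sqrt (R t))
      (nhdsWithin 0 (Set.Ioc 0 1)) (nhds (Real.sqrt (2 / Real.pi))) :=
  regular_heat_content_gaussian_limit_general a b hab X R hRpos hlaw hRlim H hH
end

section
/- Let D = (a,b) with a < b and let (X_t)_{t∈(0,1]} be real random variables such that for each t ∈ (0,1]: X_t is integrable, −X_t has the same distribution as X_t, and E[X_t·1_{X_t ≥ 0}] > 0. Assume that ∫_{b−a}^∞ ℙ(X_t > u) du = o(E[X_t·1_{X_t ≥ 0}]) as t ↓ 0. Then lim_{t↓0} ((b−a) − H_D(t)) / E[X_t·1_{X_t ≥ 0}] = 2. -/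
open MeasureTheory ProbabilityTheory Filter Set

/-!
If `X` has a symmetric law `ν`, then `ℙ(X + x ∉ (a,b)) = ν[x - a, ∞) + ν[b - x, ∞)` for
`x ∈ (a,b)`, so integrating in `x` gives `|D| - H_D = 2 ∫₀^|D| ν(u, ∞) du` (closed and open
tails differ only at the countably many atoms of `ν`). The layer-cake formula
`E[X 1_{X ≥ 0}] = ∫₀^∞ ν(u, ∞) du` turns this into
`|D| - H_D = 2 (E[X 1_{X ≥ 0}] - ∫_{|D|}^∞ ℙ(X > u) du)`,
and the little-o hypothesis finishes.
-/

/-- The heat content of `(a,b)` written through the law `ν` of `X`: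
`ℙ(X + x ∈ (a,b)) = ν (a - x, b - x)`. -/
noncomputable def heatContent (ν : Measure ℝ) (a b : ℝ) : ℝ :=
  ∫ x in Ioo a b, ν.real (Ioo (a - x) (b - x))

section Law

variable (ν : Measure ℝ)

theorem measureReal_Ioo_eq_one_sub_s7 [IsProbabilityMeasure ν] {s t : ℝ} (hst : s < t) :
    ν.real (Ioo s t) = 1 - ν.real (Iic s) - ν.real (Ici t) := by
  have hIio : ν.real (Iic s) + ν.real (Ioo s t) = ν.real (Iio t) := by
    rw [← Iic_union_Ioo_eq_Iio hst,
      measureReal_union (Iic_disjoint_Ioi le_rfl |>.mono_right Ioo_subset_Ioi_self)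
        measurableSet_Ioo]
  have hIci : ν.real (Iio t) = 1 - ν.real (Ici t) := by
    rw [← compl_Ici, probReal_compl_eq_one_sub measurableSet_Ici]
  linarith

theorem measureReal_Iic_eq_measureReal_Ici_neg [ν.IsNegInvariant] (s : ℝ) :
    ν.real (Iic s) = ν.real (Ici (-s)) := by
  rw [measureReal_def, measureReal_def, ← Measure.measure_neg ν (Ici (-s)), neg_Ici, neg_neg]

theorem intervalIntegral_measureReal_Ici (a b : ℝ) :
    ∫ u in a..b, ν.real (Ici u) = ∫ u in a..b, ν.real (Ioi u) :=
  intervalIntegral.integral_congr_ae <|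
    (meas_le_ae_eq_meas_lt ν volume id).mono fun _ hu _ => congrArg ENNReal.toReal hu

theorem antitone_measureReal_Ici [IsFiniteMeasure ν] : Antitone fun u => ν.real (Ici u) :=
  fun _ _ h => measureReal_mono (Ici_subset_Ici.2 h)

theorem heatContent_eq_of_isNegInvariant [IsProbabilityMeasure ν] [ν.IsNegInvariant] {a b : ℝ}
    (hab : a ≤ b) :
    heatContent ν a b = (b - a) - 2 * ∫ u in 0..b - a, ν.real (Ioi u) := by
  have hpoint : ∀ x ∈ Ioo a b, ν.real (Ioo (a - x) (b - x))
      = 1 - ν.real (Ici (x - a)) - ν.real (Ici (b - x)) := fun x hx => by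
    rw [measureReal_Ioo_eq_one_sub_s7 ν (by linarith [hx.1, hx.2]),
      measureReal_Iic_eq_measureReal_Ici_neg, neg_sub]
  have hS := antitone_measureReal_Ici ν
  have hleft : IntervalIntegrable (fun x => ν.real (Ici (x - a))) volume a b :=
    (hS.comp_monotone fun _ _ h => sub_le_sub_right h a).intervalIntegrable
  have hright : IntervalIntegrable (fun x => ν.real (Ici (b - x))) volume a b :=
    (hS.comp fun _ _ h => sub_le_sub_left h b).intervalIntegrable
  rw [heatContent, setIntegral_congr_fun measurableSet_Ioo hpoint,
    ← integral_Ioc_eq_integral_Ioo, ← intervalIntegral.integral_of_le hab,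
    intervalIntegral.integral_sub (intervalIntegrable_const.sub hleft) hright,
    intervalIntegral.integral_sub intervalIntegrable_const hleft,
    intervalIntegral.integral_comp_sub_right (fun u => ν.real (Ici u)),
    intervalIntegral.integral_comp_sub_left (fun u => ν.real (Ici u)), sub_self, sub_self,
    intervalIntegral_measureReal_Ici]
  simp only [intervalIntegral.integral_const, smul_eq_mul, mul_one]
  ring

theorem setOf_lt_indicator_Ici_zero {u : ℝ} (hu : 0 < u) :
    {y : ℝ | u < (Ici 0).indicator id y} = Ioi u := by
  ext y
  simp only [mem_ofPred_eq, mem_Ioi, indicator_apply, mem_Ici, id]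
  split_ifs <;> constructor <;> intro <;> linarith

theorem indicator_Ici_zero_id_nonneg (y : ℝ) : 0 ≤ (Ici 0).indicator id y :=
  indicator_nonneg (fun _ hy => hy) y

theorem setLIntegral_measure_Ioi_eq_lintegral_indicator :
    ∫⁻ u in Ioi 0, ν (Ioi u) = ∫⁻ y, ENNReal.ofReal ((Ici 0).indicator id y) ∂ν := by
  rw [lintegral_eq_lintegral_meas_lt ν (ae_of_all _ indicator_Ici_zero_id_nonneg)
    (measurable_id.indicator measurableSet_Ici).aemeasurable]
  exact setLIntegral_congr_fun measurableSet_Ioi fun u hu => by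
    rw [setOf_lt_indicator_Ici_zero hu]

theorem integrableOn_measureReal_Ioi (hν : Integrable id ν) :
    IntegrableOn (fun u => ν.real (Ioi u)) (Ioi 0) := by
  refine integrable_toReal_of_lintegral_ne_top ?_ ?_
  · exact (Antitone.measurable fun _ _ h => measure_mono (Ioi_subset_Ioi h)).aemeasurable
  · rw [setLIntegral_measure_Ioi_eq_lintegral_indicator]
    exact (hν.indicator measurableSet_Ici).lintegral_lt_top.ne

theorem setIntegral_Ici_zero_eq_integral_measureReal_Ioi (hν : Integrable id ν) :
    ∫ y in Ici 0, y ∂ν = ∫ u in Ioi 0, ν.real (Ioi u) := by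
  change ∫ y in Ici 0, id y ∂ν = _
  rw [← integral_indicator measurableSet_Ici,
    (hν.indicator measurableSet_Ici).integral_eq_integral_meas_lt
      (ae_of_all _ indicator_Ici_zero_id_nonneg)]
  exact setIntegral_congr_fun measurableSet_Ioi fun u hu => by rw [setOf_lt_indicator_Ici_zero hu]

theorem sub_heatContent_eq [IsProbabilityMeasure ν] [ν.IsNegInvariant] (hν : Integrable id ν)
    {a b : ℝ} (hab : a ≤ b) :
    (b - a) - heatContent ν a b
      = 2 * (∫ y in Ici 0, y ∂ν - ∫ u in Ioi (b - a), ν.real (Ioi u)) := by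
  have hS := integrableOn_measureReal_Ioi ν hν
  rw [heatContent_eq_of_isNegInvariant ν hab,
    setIntegral_Ici_zero_eq_integral_measureReal_Ioi ν hν,
    ← intervalIntegral.integral_interval_add_Ioi hS
      (hS.mono_set (Ioi_subset_Ioi (sub_nonneg.2 hab)))]
  ring

end Law

section RandomVariable

variable {Ω : Type*} [MeasurableSpace Ω] {μ : Measure Ω} {X : Ω → ℝ}

theorem isNegInvariant_map_of_map_neg_eq (hX : AEMeasurable X μ)
    (hsym : μ.map (fun ω => -X ω) = μ.map X) : (μ.map X).IsNegInvariant :=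
  ⟨by
    rw [Measure.neg_def, AEMeasurable.map_map_of_aemeasurable measurable_neg.aemeasurable hX]
    exact hsym⟩

theorem heatContent_map (hX : AEMeasurable X μ) (a b : ℝ) :
    heatContent (μ.map X) a b = ∫ x in Ioo a b, (μ {ω | X ω + x ∈ Ioo a b}).toReal := by
  refine integral_congr_ae (ae_of_all _ fun x => ?_)
  dsimp only
  rw [map_measureReal_apply_of_aemeasurable hX measurableSet_Ioo, measureReal_def]
  congr 2 with ω
  simp only [mem_preimage, mem_Ioo, mem_ofPred_eq, sub_lt_iff_lt_add, lt_sub_iff_add_lt]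

theorem sub_integral_measure_add_mem_Ioo [IsProbabilityMeasure μ] (hX : Integrable X μ)
    (hsym : μ.map (fun ω => -X ω) = μ.map X) {a b : ℝ} (hab : a ≤ b) :
    (b - a) - ∫ x in Ioo a b, (μ {ω | X ω + x ∈ Ioo a b}).toReal
      = 2 * (∫ ω in {ω | 0 ≤ X ω}, X ω ∂μ
        - ∫ u in Ioi (b - a), (μ {ω | u < X ω}).toReal) := by
  have hXm := hX.aemeasurable
  have := isNegInvariant_map_of_map_neg_eq hXm hsym
  have := Measure.isProbabilityMeasure_map (μ := μ) hXm
  have hν : Integrable id (μ.map X) := (integrable_map_measure aestronglyMeasurable_id hXm).2 hX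
  have htail : ∀ u, (μ.map X).real (Ioi u) = (μ {ω | u < X ω}).toReal := fun u =>
    map_measureReal_apply_of_aemeasurable hXm measurableSet_Ioi
  rw [← heatContent_map hXm, sub_heatContent_eq _ hν hab,
    setIntegral_map (f := fun y => y) measurableSet_Ici aestronglyMeasurable_id hXm]
  simp_rw [htail]
  rfl

end RandomVariable

/-- For a family of integrable symmetric random variables `(X_t)` with
`E[X_t 1_{X_t ≥ 0}] > 0` and `∫_{b-a}^∞ ℙ(X_t > u) du = o(E[X_t 1_{X_t ≥ 0}])` as `t ↓ 0`,
the regular heat content of `D = (a,b)` satisfies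
`lim_{t↓0} ((b-a) - H_D(t)) / E[X_t 1_{X_t ≥ 0}] = 2`. -/
theorem regular_heat_content_symmetric_limit
    {Ω : Type*} [MeasureSpace Ω] [IsProbabilityMeasure (ℙ : Measure Ω)]
    (a b : ℝ) (hab : a < b) (X : ℝ → Ω → ℝ)
    (hint : ∀ t ∈ Set.Ioc (0:ℝ) 1, Integrable (X t) ℙ)
    (hsym : ∀ t ∈ Set.Ioc (0:ℝ) 1,
      Measure.map (fun ω => -X t ω) ℙ = Measure.map (X t) ℙ)
    (m H : ℝ → ℝ)
    (hm : ∀ t, m t = ∫ ω in {ω | 0 ≤ X t ω}, X t ω ∂ℙ)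
    (hmpos : ∀ t ∈ Set.Ioc (0:ℝ) 1, 0 < m t)
    (hH : ∀ t, H t = ∫ x in Set.Ioo a b, (ℙ {ω | X t ω + x ∈ Set.Ioo a b}).toReal)
    (hlittleo : Tendsto
      (fun t => (∫ u in Set.Ioi (b - a), (ℙ {ω | u < X t ω}).toReal) / m t)
      (nhdsWithin 0 (Set.Ioc 0 1)) (nhds 0)) :
    Tendsto (fun t => ((b - a) - H t) / m t) (nhdsWithin 0 (Set.Ioc 0 1)) (nhds 2) := by
  have hratio : ∀ t ∈ Ioc (0:ℝ) 1, ((b - a) - H t) / m t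
      = 2 - 2 * ((∫ u in Ioi (b - a), (ℙ {ω | u < X t ω}).toReal) / m t) := fun t ht => by
    rw [hH, sub_integral_measure_add_mem_Ioo (hint t ht) (hsym t ht) hab.le, ← hm]
    field_simp [(hmpos t ht).ne']
  have hlim := (tendsto_const_nhds (x := (2 : ℝ))).sub (hlittleo.const_mul 2)
  rw [mul_zero, sub_zero] at hlim
  exact hlim.congr' (eventually_nhdsWithin_of_forall fun t ht => (hratio t ht).symm)
end

section
/- Let D = (a,b) with a < b, let H > 0, and let (X_t)_{t∈(0,1]} be real random variables such that X_1 is integrable with E[X_1·1_{X_1 ≥ 0}] > 0, and for each t ∈ (0,1]: −X_t has the same distribution as X_t and X_t has the same distribution as t^H · X_1. Then lim_{t↓0} ((b−a) − H_D(t)) / t^H = 2·E[X_1·1_{X_1 ≥ 0}]. -/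
/-!
For a symmetric law `ν`, `ν (a - x, b - x) = 1 - ν [x - a, ∞) - ν [b - x, ∞)`, and each tail
term integrates over `x ∈ (a, b)` to `∫₀^{b-a} ν [u, ∞) du`. With `ν` the law of `t^H X₁` this
gives `|D| - H_D(t) = 2 t^H ∫₀^{(b-a)/t^H} ℙ(X₁ ≥ v) dv`. As `t ↓ 0` the upper limit tends to
`∞`, and by the layer-cake formula `∫₀^∞ ℙ(X₁ ≥ v) dv = E[X₁ 1_{X₁ ≥ 0}]`.
-/

open MeasureTheory ProbabilityTheory Filter Set Topology

lemma setOf_le_max_zero {α : Type*} (f : α → ℝ) {v : ℝ} (hv : 0 < v) :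
    {x | v ≤ max (f x) 0} = {x | v ≤ f x} := by
  ext x
  simp [hv.not_ge]

section LayerCake

variable {Ω : Type*} [MeasurableSpace Ω] {μ : Measure Ω} {Y : Ω → ℝ}

lemma setIntegral_nonneg_eq_integral_max_zero (hY : AEMeasurable Y μ) :
    ∫ ω in {ω | 0 ≤ Y ω}, Y ω ∂μ = ∫ ω, max (Y ω) 0 ∂μ := by
  have hs : NullMeasurableSet {ω | 0 ≤ Y ω} μ := nullMeasurableSet_le aemeasurable_const hY
  rw [← setIntegral_eq_integral_of_forall_compl_eq_zero fun ω hω => max_eq_right (not_le.1 hω).le]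
  exact setIntegral_congr_ae₀ hs (Eventually.of_forall fun ω hω => (max_eq_left hω).symm)

lemma integrableOn_Ioi_measureReal_le (hY : Integrable Y μ) :
    IntegrableOn (fun v => μ.real {ω | v ≤ Y ω}) (Ioi 0) := by
  have hmeas : Measurable fun v : ℝ => μ {ω | v ≤ Y ω} :=
    Antitone.measurable fun v w hvw => measure_mono fun ω h => hvw.trans h
  refine integrable_toReal_of_lintegral_ne_top hmeas.aemeasurable ?_
  have hpos : 0 ≤ᵐ[μ] fun ω => max (Y ω) 0 := Eventually.of_forall fun ω => le_max_right _ _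
  rw [setLIntegral_congr_fun measurableSet_Ioi fun v hv => congrArg μ (setOf_le_max_zero Y hv).symm,
    ← lintegral_eq_lintegral_meas_le μ hpos hY.pos_part.aemeasurable]
  exact hY.pos_part.lintegral_lt_top.ne

lemma integral_Ioi_measureReal_le (hY : Integrable Y μ) :
    ∫ v in Ioi 0, μ.real {ω | v ≤ Y ω} = ∫ ω in {ω | 0 ≤ Y ω}, Y ω ∂μ := by
  rw [setIntegral_nonneg_eq_integral_max_zero hY.aemeasurable,
    hY.pos_part.integral_eq_integral_meas_le (Eventually.of_forall fun ω => le_max_right _ _)]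
  exact setIntegral_congr_fun measurableSet_Ioi fun v hv => by rw [setOf_le_max_zero Y hv]

end LayerCake

section SymmetricLaw

variable {ν : Measure ℝ}

lemma measureReal_Iic_eq_Ici_neg (hν : ν.map (fun y => -y) = ν) (c : ℝ) :
    ν.real (Iic c) = ν.real (Ici (-c)) := by
  conv_lhs => rw [← hν]
  rw [map_measureReal_apply measurable_neg measurableSet_Iic]
  congr 1
  ext y
  simp

lemma measureReal_Ioo_eq_one_sub_Ici [IsProbabilityMeasure ν] (hν : ν.map (fun y => -y) = ν)
    {c d : ℝ} (hcd : c < d) :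
    ν.real (Ioo c d) = 1 - ν.real (Ici (-c)) - ν.real (Ici d) := by
  have hIoo : Ioo c d = (Iic c ∪ Ici d)ᶜ := by
    rw [compl_union, compl_Iic, compl_Ici, Ioi_inter_Iio]
  rw [hIoo, probReal_compl_eq_one_sub (measurableSet_Iic.union measurableSet_Ici),
    measureReal_union (Iic_disjoint_Ici.2 hcd.not_ge) measurableSet_Ici,
    measureReal_Iic_eq_Ici_neg hν, sub_sub]

lemma sub_setIntegral_measureReal_Ioo_eq_two_mul_integral_Ici [IsProbabilityMeasure ν]
    (hν : ν.map (fun y => -y) = ν) {a b : ℝ} (hab : a ≤ b) :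
    (b - a) - ∫ x in Ioo a b, ν.real (Ioo (a - x) (b - x))
      = 2 * ∫ u in 0..(b - a), ν.real (Ici u) := by
  set G : ℝ → ℝ := fun u => ν.real (Ici u)
  have hG : Antitone G := fun u v huv => measureReal_mono (Ici_subset_Ici.2 huv)
  have hint₁ : IntervalIntegrable (fun x => G (x - a)) volume a b :=
    (hG.comp_monotone fun x y h => sub_le_sub_right h a).intervalIntegrable
  have hint₂ : IntervalIntegrable (fun x => G (b - x)) volume a b :=
    (hG.comp fun x y h => sub_le_sub_left h b).intervalIntegrable
  have hsplit : ∫ x in Ioo a b, ν.real (Ioo (a - x) (b - x))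
      = ∫ x in a..b, (1 - G (x - a) - G (b - x)) := by
    rw [intervalIntegral.integral_of_le hab, integral_Ioc_eq_integral_Ioo]
    refine setIntegral_congr_fun measurableSet_Ioo fun x hx => ?_
    rw [measureReal_Ioo_eq_one_sub_Ici hν (by linarith [hx.1, hx.2]), neg_sub]
  rw [hsplit, intervalIntegral.integral_sub (intervalIntegrable_const.sub hint₁) hint₂,
    intervalIntegral.integral_sub intervalIntegrable_const hint₁,
    intervalIntegral.integral_comp_sub_right, intervalIntegral.integral_comp_sub_left]
  simp only [intervalIntegral.integral_const, smul_eq_mul, mul_one, sub_self]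
  ring

end SymmetricLaw

section Scaling

variable {Ω : Type*} [MeasurableSpace Ω] {μ : Measure Ω} {Y : Ω → ℝ}

lemma intervalIntegral_measureReal_map_const_mul_Ici (hY : AEMeasurable Y μ) {s : ℝ} (hs : 0 < s)
    (L : ℝ) :
    ∫ u in 0..L, (μ.map fun ω => s * Y ω).real (Ici u)
      = s * ∫ v in 0..L / s, μ.real {ω | v ≤ Y ω} := by
  have hpre : ∀ u, (μ.map fun ω => s * Y ω).real (Ici u) = μ.real {ω | u / s ≤ Y ω} := by
    intro u
    rw [map_measureReal_apply_of_aemeasurable (hY.const_mul s) measurableSet_Ici]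
    congr 1
    ext ω
    simp [div_le_iff₀' hs]
  simp_rw [hpre]
  rw [intervalIntegral.integral_comp_div (fun v => μ.real {ω | v ≤ Y ω}) hs.ne', zero_div,
    smul_eq_mul]

lemma sub_setIntegral_measureReal_add_mem_Ioo_eq [IsProbabilityMeasure μ] {Z : Ω → ℝ}
    (hY : AEMeasurable Y μ) {s : ℝ} (hs : 0 < s) (hsym : μ.map (fun ω => -Z ω) = μ.map Z)
    (hZ : μ.map Z = μ.map (fun ω => s * Y ω)) {a b : ℝ} (hab : a ≤ b) :
    (b - a) - ∫ x in Ioo a b, μ.real {ω | Z ω + x ∈ Ioo a b}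
      = 2 * (s * ∫ v in 0..(b - a) / s, μ.real {ω | v ≤ Y ω}) := by
  have := Measure.isProbabilityMeasure_map (hY.const_mul s)
  have hZm : AEMeasurable Z μ := aemeasurable_of_map_neZero (by rw [hZ]; infer_instance)
  have := Measure.isProbabilityMeasure_map hZm
  have hν : (μ.map Z).map (fun y => -y) = μ.map Z := by
    rw [AEMeasurable.map_map_of_aemeasurable measurable_neg.aemeasurable hZm]
    exact hsym
  have hlaw : ∀ x, μ.real {ω | Z ω + x ∈ Ioo a b} = (μ.map Z).real (Ioo (a - x) (b - x)) := by
    intro x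
    rw [map_measureReal_apply_of_aemeasurable hZm measurableSet_Ioo, ← preimage_add_const_Ioo]
    rfl
  simp_rw [hlaw]
  rw [sub_setIntegral_measureReal_Ioo_eq_two_mul_integral_Ici hν hab, hZ,
    intervalIntegral_measureReal_map_const_mul_Ici hY hs]

end Scaling

lemma tendsto_const_div_rpow_nhdsGT_zero {c y : ℝ} (hc : 0 < c) (hy : 0 < y) :
    Tendsto (fun t : ℝ => c / t ^ y) (𝓝[>] 0) atTop := by
  refine ((tendsto_rpow_neg_nhdsGT_zero (neg_neg_of_pos hy)).const_mul_atTop hc).congr' ?_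
  filter_upwards [self_mem_nhdsWithin] with t ht
  rw [Real.rpow_neg ht.le, div_eq_mul_inv]

theorem regular_heat_content_selfsimilar_limit_general
    {Ω : Type*} [MeasureSpace Ω] [IsProbabilityMeasure (ℙ : Measure Ω)]
    (a b : ℝ) (hab : a < b) (Hidx : ℝ) (hHidx : 0 < Hidx) (X : ℝ → Ω → ℝ)
    (hint : Integrable (X 1) ℙ)
    (hsym : ∀ t ∈ Set.Ioc (0:ℝ) 1,
      Measure.map (fun ω => -X t ω) ℙ = Measure.map (X t) ℙ)
    (hss : ∀ t ∈ Set.Ioc (0:ℝ) 1,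
      Measure.map (X t) ℙ = Measure.map (fun ω => t ^ Hidx * X 1 ω) ℙ)
    (H : ℝ → ℝ)
    (hH : ∀ t, H t = ∫ x in Set.Ioo a b, (ℙ {ω | X t ω + x ∈ Set.Ioo a b}).toReal) :
    Tendsto (fun t => ((b - a) - H t) / t ^ Hidx) (nhdsWithin 0 (Set.Ioc 0 1))
      (nhds (2 * ∫ ω in {ω | 0 ≤ X 1 ω}, X 1 ω ∂ℙ)) := by
  have hcutoff : Tendsto (fun t : ℝ => (b - a) / t ^ Hidx) (𝓝[Ioc 0 1] 0) atTop :=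
    (tendsto_const_div_rpow_nhdsGT_zero (sub_pos.2 hab) hHidx).mono_left
      (nhdsWithin_mono _ Ioc_subset_Ioi_self)
  have hlim := (intervalIntegral_tendsto_integral_Ioi 0
    (integrableOn_Ioi_measureReal_le hint) hcutoff).const_mul 2
  rw [integral_Ioi_measureReal_le hint] at hlim
  refine hlim.congr' ?_
  filter_upwards [self_mem_nhdsWithin] with t ht
  have hs : 0 < t ^ Hidx := Real.rpow_pos_of_pos ht.1 Hidx
  have hHt : H t = ∫ x in Ioo a b, Measure.real ℙ {ω | X t ω + x ∈ Ioo a b} := hH t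
  rw [hHt, sub_setIntegral_measureReal_add_mem_Ioo_eq hint.aemeasurable hs (hsym t ht) (hss t ht)
    hab.le, mul_left_comm, mul_div_cancel_left₀ _ hs.ne']

/-- For a family of symmetric random variables `(X_t)` with
`X_t =ᵈ t^H X_1`, `X_1` integrable, and `E[X_1 1_{X_1 ≥ 0}] > 0`, the regular heat
content of `D = (a,b)` satisfies
`lim_{t↓0} ((b-a) - H_D(t)) / t^H = 2 E[X_1 1_{X_1 ≥ 0}]`. -/
theorem regular_heat_content_selfsimilar_limit
    {Ω : Type*} [MeasureSpace Ω] [IsProbabilityMeasure (ℙ : Measure Ω)]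
    (a b : ℝ) (hab : a < b) (Hidx : ℝ) (hHidx : 0 < Hidx) (X : ℝ → Ω → ℝ)
    (hint : Integrable (X 1) ℙ)
    (hmpos : 0 < ∫ ω in {ω | 0 ≤ X 1 ω}, X 1 ω ∂ℙ)
    (hsym : ∀ t ∈ Set.Ioc (0:ℝ) 1,
      Measure.map (fun ω => -X t ω) ℙ = Measure.map (X t) ℙ)
    (hss : ∀ t ∈ Set.Ioc (0:ℝ) 1,
      Measure.map (X t) ℙ = Measure.map (fun ω => t ^ Hidx * X 1 ω) ℙ)
    (H : ℝ → ℝ)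
    (hH : ∀ t, H t = ∫ x in Set.Ioo a b, (ℙ {ω | X t ω + x ∈ Set.Ioo a b}).toReal) :
    Tendsto (fun t => ((b - a) - H t) / t ^ Hidx) (nhdsWithin 0 (Set.Ioc 0 1))
      (nhds (2 * ∫ ω in {ω | 0 ≤ X 1 ω}, X 1 ω ∂ℙ)) :=
  regular_heat_content_selfsimilar_limit_general a b hab Hidx hHidx X hint hsym hss H hH
end

section
/- Let (X_t)_{t∈[0,1]} be a zero-mean Gaussian process with càdlàg paths, X_0 = 0, X_t non-degenerate for every t ∈ (0,1], μ_t < ∞ for every t ∈ (0,1], and R_t → 0 as t ↓ 0. Then σ_t²/μ_t → 0 as t ↓ 0. -/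
/-!
Each `X_s`, `0 < s ≤ t`, is a centred Gaussian of variance `R_s`, so by scaling
`E[X_s⁺] = c √R_s` with `c = E[Z⁺] > 0` for a standard Gaussian `Z`. Since `X_0 = 0` and càdlàg
paths are bounded on compact intervals, `sup_{[0,t]} X ≥ X_s⁺`, hence `c √R_s ≤ μ_t` and
`σ_t² ≤ c⁻² μ_t²`. Therefore `0 ≤ σ_t² / μ_t ≤ c⁻¹ σ_t → 0`, because `σ_t² → 0` with `R_t`.
-/

open MeasureTheory ProbabilityTheory Filter Set

/-- A real-valued function on `[0,1]` is càdlàg: right-continuous on `[0,1)` and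
with left limits on `(0,1]`. -/
def IsCadlagPath (f : ℝ → ℝ) : Prop :=
  (∀ t ∈ Set.Ico (0:ℝ) 1, ContinuousWithinAt f (Set.Ici t) t) ∧
  (∀ t ∈ Set.Ioc (0:ℝ) 1, ∃ l, Filter.Tendsto f (nhdsWithin t (Set.Iio t)) (nhds l))

/-- `(X_t)_{t∈[0,1]}` is a zero-mean Gaussian process: every finite linear combination
`∑ᵢ cᵢ X_{tᵢ}` has a centered Gaussian distribution. -/
def IsZeroMeanGaussianProcess {Ω : Type*} [MeasureSpace Ω] (X : ℝ → Ω → ℝ) : Prop :=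
  ∀ (n : ℕ) (ts : Fin n → ℝ), (∀ i, ts i ∈ Set.Icc (0:ℝ) 1) → ∀ (c : Fin n → ℝ),
    ∃ v : NNReal, Measure.map (fun ω => ∑ i, c i * X (ts i) ω) ℙ =
      ProbabilityTheory.gaussianReal 0 v

open Topology
open scoped NNReal

namespace ProbabilityTheory

lemma gaussianReal_zero_eq_map_sqrt_mul (v : ℝ≥0) :
    gaussianReal 0 v = (gaussianReal 0 1).map (√(v : ℝ) * ·) := by
  rw [gaussianReal_map_const_mul, mul_zero, mul_one]
  congr
  ext
  simp

lemma integrable_max_zero_gaussianReal (m : ℝ) (v : ℝ≥0) :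
    Integrable (fun x ↦ max x 0) (gaussianReal m v) :=
  ((memLp_id_gaussianReal 1).integrable le_rfl).pos_part

lemma integral_max_zero_gaussianReal (v : ℝ≥0) :
    ∫ x, max x 0 ∂gaussianReal 0 v = √(v : ℝ) * ∫ x, max x 0 ∂gaussianReal 0 1 := by
  rw [gaussianReal_zero_eq_map_sqrt_mul, integral_map (by fun_prop) (by fun_prop),
    ← integral_const_mul]
  simp_rw [mul_max_of_nonneg _ _ (Real.sqrt_nonneg _), mul_zero]

lemma integral_max_zero_gaussianReal_one_pos : 0 < ∫ x, max x 0 ∂gaussianReal 0 1 := by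
  rw [integral_pos_iff_support_of_nonneg (fun x ↦ le_max_right x 0)
    (integrable_max_zero_gaussianReal 0 1)]
  have hsupp : Function.support (fun x : ℝ ↦ max x 0) = Ioi 0 := by
    ext x; simp
  rw [hsupp, pos_iff_ne_zero]
  exact fun h ↦ by simpa using gaussianReal_absolutelyContinuous' 0 one_ne_zero h

lemma integral_sq_gaussianReal (v : ℝ≥0) : ∫ x, x ^ 2 ∂gaussianReal 0 v = v := by
  rw [← variance_of_integral_eq_zero aemeasurable_id' integral_id_gaussianReal,
    variance_fun_id_gaussianReal]

lemma HasLaw.integral_sq_le_of_max_zero_le {Ω : Type*} {mΩ : MeasurableSpace Ω}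
    {P : Measure Ω} {Y S : Ω → ℝ} {v : ℝ≥0} (hY : HasLaw Y (gaussianReal 0 v) P)
    (hS : Integrable S P) (hYS : ∀ ω, max (Y ω) 0 ≤ S ω) :
    ∫ ω, Y ω ^ 2 ∂P ≤ (∫ x, max x 0 ∂gaussianReal 0 1)⁻¹ ^ 2 * (∫ ω, S ω ∂P) ^ 2 := by
  set c := ∫ x, max x 0 ∂gaussianReal 0 1
  have hc : 0 < c := integral_max_zero_gaussianReal_one_pos
  have hsq : ∫ ω, Y ω ^ 2 ∂P = v :=
    (hY.integral_comp (f := (· ^ 2)) (by fun_prop)).trans (integral_sq_gaussianReal v)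
  have hpos : √(v : ℝ) * c ≤ ∫ ω, S ω ∂P := by
    rw [← integral_max_zero_gaussianReal,
      ← hY.integral_comp (f := (max · 0)) (by fun_prop)]
    refine integral_mono (Integrable.comp_aemeasurable ?_ hY.aemeasurable) hS hYS
    rw [hY.map_eq]
    exact integrable_max_zero_gaussianReal 0 v
  calc ∫ ω, Y ω ^ 2 ∂P = c⁻¹ ^ 2 * (√(v : ℝ) * c) ^ 2 := by
        rw [hsq, mul_pow, Real.sq_sqrt v.coe_nonneg]
        field_simp
    _ ≤ c⁻¹ ^ 2 * (∫ ω, S ω ∂P) ^ 2 := by gcongr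

end ProbabilityTheory

lemma IsZeroMeanGaussianProcess.exists_hasLaw {Ω : Type*} [MeasureSpace Ω] {X : ℝ → Ω → ℝ}
    (hX : IsZeroMeanGaussianProcess X) {t : ℝ} (ht : t ∈ Icc 0 1) :
    ∃ v : ℝ≥0, HasLaw (X t) (gaussianReal 0 v) ℙ := by
  obtain ⟨v, hv⟩ := hX 1 ![t] (by simp [ht]) ![1]
  simp only [Fin.sum_univ_one, Matrix.cons_val_fin_one, one_mul] at hv
  exact ⟨v, ⟨aemeasurable_of_map_neZero (by rw [hv]; infer_instance), hv⟩⟩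

lemma bddAbove_image_Icc_of_continuousWithinAt_Ici {f : ℝ → ℝ} {a b : ℝ}
    (hright : ∀ u ∈ Icc a b, ContinuousWithinAt f (Ici u) u)
    (hleft : ∀ u ∈ Ioc a b, ∃ l, Tendsto f (𝓝[<] u) (𝓝 l)) :
    BddAbove (f '' Icc a b) := by
  refine isCompact_Icc.induction_on (p := fun s ↦ BddAbove (f '' s)) (by simp)
    (fun s t hst ht ↦ ht.mono (image_mono hst))
    (fun s t hs ht ↦ by rw [image_union]; exact hs.union ht) fun u hu ↦ ?_
  suffices ∃ M, ∀ᶠ x in 𝓝[Icc a b] u, f x ≤ M by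
    obtain ⟨M, hM⟩ := this
    exact ⟨_, hM, M, by rintro _ ⟨x, hx, rfl⟩; exact hx⟩
  have hr : ∀ᶠ x in 𝓝[≥] u, f x ≤ f u + 1 :=
    (hright u hu).eventually (eventually_le_nhds (lt_add_one _))
  rcases hu.1.eq_or_lt with rfl | hau
  · exact ⟨_, hr.filter_mono (nhdsWithin_mono _ fun x hx ↦ hx.1)⟩
  obtain ⟨l, hl⟩ := hleft u ⟨hau, hu.2⟩
  have hl' : ∀ᶠ x in 𝓝[<] u, f x ≤ l + 1 := hl.eventually (eventually_le_nhds (lt_add_one _))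
  refine ⟨max (l + 1) (f u + 1), nhdsWithin_le_nhds ?_⟩
  show ∀ᶠ x in 𝓝 u, f x ≤ max (l + 1) (f u + 1)
  rw [← nhdsLT_sup_nhdsGE, eventually_sup]
  exact ⟨hl'.mono fun x hx ↦ hx.trans (le_max_left ..),
    hr.mono fun x hx ↦ hx.trans (le_max_right ..)⟩

lemma IsCadlagPath.bddAbove_range_Icc {f : ℝ → ℝ} (hf : IsCadlagPath f) {t : ℝ} (ht : t < 1) :
    BddAbove (range fun s : Icc (0 : ℝ) t ↦ f s) := by
  rw [← image_eq_range]
  exact bddAbove_image_Icc_of_continuousWithinAt_Ici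
    (fun u hu ↦ hf.1 u ⟨hu.1, hu.2.trans_lt ht⟩) (fun u hu ↦ hf.2 u ⟨hu.1, hu.2.trans ht.le⟩)

lemma tendsto_iSup_Icc_zero {R : ℝ → ℝ} (hnn : ∀ s, 0 ≤ R s) (h0 : R 0 = 0)
    (hR : Tendsto R (𝓝[>] 0) (𝓝 0)) :
    Tendsto (fun t ↦ ⨆ s : Icc (0 : ℝ) t, R s) (𝓝[>] 0) (𝓝 0) := by
  refine tendsto_order.2
    ⟨fun a ha ↦ .of_forall fun t ↦ ha.trans_le (Real.iSup_nonneg fun s ↦ hnn _), fun a ha ↦ ?_⟩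
  obtain ⟨δ, hδ, hRδ⟩ :=
    mem_nhdsGT_iff_exists_Ioo_subset.1 (hR.eventually (eventually_le_nhds (half_pos ha)))
  filter_upwards [Ioo_mem_nhdsGT hδ] with t ht
  refine (Real.iSup_le (fun s ↦ ?_) (by linarith)).trans_lt (half_lt_self ha)
  rcases s.2.1.eq_or_lt with h | h
  · rw [← h, h0]; linarith
  · exact hRδ ⟨h, s.2.2.trans_lt ht.2⟩

lemma tendsto_div_of_le_mul_sq {α : Type*} {l : Filter α} {f g : α → ℝ} {C : ℝ}
    (hf : Tendsto f l (𝓝 0)) (hf0 : ∀ᶠ x in l, 0 ≤ f x) (hg0 : ∀ᶠ x in l, 0 ≤ g x)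
    (hfg : ∀ᶠ x in l, f x ≤ C * g x ^ 2) : Tendsto (fun x ↦ f x / g x) l (𝓝 0) := by
  have hsqrt : Tendsto (fun x ↦ √(C * f x)) l (𝓝 0) := by
    simpa using (hf.const_mul C).sqrt
  refine tendsto_of_tendsto_of_tendsto_of_le_of_le' tendsto_const_nhds hsqrt ?_ ?_
  · filter_upwards [hf0, hg0] with x hfx hgx using div_nonneg hfx hgx
  filter_upwards [hf0, hg0, hfg] with x hfx hgx hfgx
  refine (le_abs_self _).trans (Real.abs_le_sqrt ?_)
  rcases hgx.eq_or_lt with hgx | hgx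
  · rw [← hgx, zero_pow two_ne_zero, mul_zero] at hfgx
    simp [le_antisymm hfgx hfx]
  rw [div_pow, div_le_iff₀ (by positivity)]
  nlinarith

theorem sigma_sq_little_o_of_mu_general
    {Ω : Type*} [MeasureSpace Ω]
    (X : ℝ → Ω → ℝ)
    (hGauss : IsZeroMeanGaussianProcess X)
    (hpath : ∀ ω, IsCadlagPath (fun s => X s ω))
    (hX0 : ∀ ω, X 0 ω = 0)
    (hμfin : ∀ t ∈ Set.Ioc (0:ℝ) 1,
      Integrable (fun ω => ⨆ s : Set.Icc (0:ℝ) t, X s.1 ω) ℙ)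
    (R μ σsq : ℝ → ℝ)
    (hR : ∀ s, R s = ∫ ω, (X s ω) ^ 2 ∂ℙ)
    (hRlim : Tendsto R (nhdsWithin 0 (Set.Ioc 0 1)) (nhds 0))
    (hμ : ∀ t, μ t = ∫ ω, (⨆ s : Set.Icc (0:ℝ) t, X s.1 ω) ∂ℙ)
    (hσsq : ∀ t, σsq t = ⨆ s : Set.Icc (0:ℝ) t, R s.1) :
    Tendsto (fun t => σsq t / μ t) (nhdsWithin 0 (Set.Ioc 0 1)) (nhds 0) := by
  rw [nhdsWithin_Ioc_eq_nhdsGT one_pos] at hRlim ⊢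
  have hRnn (s : ℝ) : 0 ≤ R s := (hR s).symm ▸ integral_nonneg fun ω ↦ sq_nonneg _
  have hσ : Tendsto σsq (𝓝[>] 0) (𝓝 0) := by
    simpa only [← funext hσsq] using tendsto_iSup_Icc_zero hRnn (by simp [hR, hX0]) hRlim
  have hmax : ∀ t < 1, ∀ s ∈ Icc 0 t, ∀ ω, max (X s ω) 0 ≤ ⨆ r : Icc (0 : ℝ) t, X r ω := by
    intro t ht s hs ω
    have hle := le_ciSup ((hpath ω).bddAbove_range_Icc ht)
    exact max_le (hle ⟨s, hs⟩) (by simpa [hX0] using hle ⟨0, le_rfl, hs.1.trans hs.2⟩)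
  have hIoo : ∀ᶠ t in 𝓝[>] (0 : ℝ), t ∈ Ioo 0 1 := Ioo_mem_nhdsGT one_pos
  set c := ∫ x, max x 0 ∂gaussianReal 0 1
  refine tendsto_div_of_le_mul_sq (C := c⁻¹ ^ 2) hσ (.of_forall fun t ↦ ?_) ?_ ?_
  · exact (hσsq t).symm ▸ Real.iSup_nonneg fun s ↦ hRnn s
  · filter_upwards [hIoo] with t ht
    rw [hμ]
    exact integral_nonneg fun ω ↦ (le_max_right _ _).trans (hmax t ht.2 0 ⟨le_rfl, ht.1.le⟩ ω)
  · filter_upwards [hIoo] with t ht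
    rw [hσsq, hμ]
    refine Real.iSup_le (fun s ↦ ?_) (by positivity)
    obtain ⟨v, hv⟩ := hGauss.exists_hasLaw ⟨s.2.1, s.2.2.trans ht.2.le⟩
    rw [hR]
    exact hv.integral_sq_le_of_max_zero_le (hμfin t ⟨ht.1, ht.2.le⟩) (hmax t ht.2 s s.2)

/-- For a zero-mean Gaussian process with càdlàg paths, `X₀ = 0`,
non-degenerate marginals, finite `μ_t`, and `R_t → 0` as `t ↓ 0`, one has
`σ_t²/μ_t → 0` as `t ↓ 0`. -/
theorem sigma_sq_little_o_of_mu
    {Ω : Type*} [MeasureSpace Ω] [IsProbabilityMeasure (ℙ : Measure Ω)]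
    (X : ℝ → Ω → ℝ)
    (hGauss : IsZeroMeanGaussianProcess X)
    (hpath : ∀ ω, IsCadlagPath (fun s => X s ω))
    (hX0 : ∀ ω, X 0 ω = 0)
    (hnondeg : ∀ t ∈ Set.Ioc (0:ℝ) 1, 0 < ℙ {ω | X t ω ≠ 0})
    (hμfin : ∀ t ∈ Set.Ioc (0:ℝ) 1,
      Integrable (fun ω => ⨆ s : Set.Icc (0:ℝ) t, X s.1 ω) ℙ)
    (R μ σsq : ℝ → ℝ)
    (hR : ∀ s, R s = ∫ ω, (X s ω) ^ 2 ∂ℙ)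
    (hRlim : Tendsto R (nhdsWithin 0 (Set.Ioc 0 1)) (nhds 0))
    (hμ : ∀ t, μ t = ∫ ω, (⨆ s : Set.Icc (0:ℝ) t, X s.1 ω) ∂ℙ)
    (hσsq : ∀ t, σsq t = ⨆ s : Set.Icc (0:ℝ) t, R s.1) :
    Tendsto (fun t => σsq t / μ t) (nhdsWithin 0 (Set.Ioc 0 1)) (nhds 0) :=
  sigma_sq_little_o_of_mu_general X hGauss hpath hX0 hμfin R μ σsq hR hRlim hμ hσsq
end

section
/- Let H ∈ (1/2, 1) and α > 0, and for t > 0 define R(t) := H(2H−1)·e^{−2αt}·∫_0^t ∫_0^t e^{α(u+v)}·|u−v|^{2H−2} du dv (the variance function of the fractional Ornstein–Uhlenbeck process). Then lim_{t↓0} R(t)/t^{2H} = 1. -/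
/-!
On `[0,t]²` the weight `e^{-2αt} e^{α(u+v)} = e^{α(u+v-2t)}` lies between `e^{-2|α|t}` and
`e^{2|α|t}`, while the unweighted integral `∫∫ |u-v|^{2H-2}` equals `t^{2H} / (H(2H-1))`
(Fubini, with inner integral `(u^{2H-1} + (t-u)^{2H-1}) / (2H-1)`). Hence `R(t) / t^{2H}` is
squeezed between `e^{∓2|α|t}`, both of which tend to `1`.
-/

open MeasureTheory Filter Set

lemma intervalIntegrable_abs_rpow {r : ℝ} (hr : -1 < r) (a b : ℝ) :
    IntervalIntegrable (fun x => |x| ^ r) volume a b := by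
  have of_nonneg : ∀ c, 0 ≤ c → IntervalIntegrable (fun x => |x| ^ r) volume 0 c :=
    fun c hc => (intervalIntegral.intervalIntegrable_rpow' hr).congr fun x hx => by
      rw [uIoc_of_le hc] at hx
      simp only [abs_of_pos hx.1]
  have from_zero : ∀ c, IntervalIntegrable (fun x => |x| ^ r) volume 0 c := by
    intro c
    rcases le_total 0 c with hc | hc
    · exact of_nonneg c hc
    · simpa using (of_nonneg (-c) (by linarith)).comp_sub_left 0
  exact (from_zero a).symm.trans (from_zero b)

lemma intervalIntegrable_abs_sub_rpow {r : ℝ} (hr : -1 < r) (v a b : ℝ) :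
    IntervalIntegrable (fun u => |u - v| ^ r) volume a b := by
  simpa using (intervalIntegrable_abs_rpow hr (a - v) (b - v)).comp_sub_right v

lemma integral_sub_const_rpow {s : ℝ} (hs : -1 < s) (a b : ℝ) :
    ∫ u in a..b, (u - a) ^ s = (b - a) ^ (s + 1) / (s + 1) := by
  rw [intervalIntegral.integral_comp_sub_right (fun x => x ^ s), sub_self,
    integral_rpow (Or.inl hs), Real.zero_rpow (by linarith), sub_zero]

lemma integral_const_sub_rpow {s : ℝ} (hs : -1 < s) (a b : ℝ) :
    ∫ u in a..b, (b - u) ^ s = (b - a) ^ (s + 1) / (s + 1) := by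
  rw [intervalIntegral.integral_comp_sub_left (fun x => x ^ s), sub_self,
    integral_rpow (Or.inl hs), Real.zero_rpow (by linarith), sub_zero]

lemma integral_abs_sub_rpow {r : ℝ} (hr : -1 < r) {a b u : ℝ} (hu : u ∈ Icc a b) :
    ∫ v in a..b, |u - v| ^ r = ((u - a) ^ (r + 1) + (b - u) ^ (r + 1)) / (r + 1) := by
  have hint : ∀ c d, IntervalIntegrable (fun v => |u - v| ^ r) volume c d := fun c d => by
    simpa only [abs_sub_comm] using intervalIntegrable_abs_sub_rpow hr u c d
  have left : ∫ v in a..u, |u - v| ^ r = (u - a) ^ (r + 1) / (r + 1) := by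
    rw [intervalIntegral.integral_congr (g := fun v => (u - v) ^ r) fun v hv => by
      rw [uIcc_of_le hu.1] at hv
      simp only [abs_of_nonneg (sub_nonneg.2 hv.2)]]
    exact integral_const_sub_rpow hr a u
  have right : ∫ v in u..b, |u - v| ^ r = (b - u) ^ (r + 1) / (r + 1) := by
    rw [intervalIntegral.integral_congr (g := fun v => (v - u) ^ r) fun v hv => by
      rw [uIcc_of_le hu.2] at hv
      simp only [abs_sub_comm u, abs_of_nonneg (sub_nonneg.2 hv.1)]]
    exact integral_sub_const_rpow hr u b
  rw [← intervalIntegral.integral_add_adjacent_intervals (hint a u) (hint u b), left, right,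
    add_div]

lemma setIntegral_Icc_abs_sub_rpow {r : ℝ} (hr : -1 < r) {a b u : ℝ} (hu : u ∈ Icc a b) :
    ∫ v in Icc a b, |u - v| ^ r = ((u - a) ^ (r + 1) + (b - u) ^ (r + 1)) / (r + 1) := by
  rw [integral_Icc_eq_integral_Ioc, ← intervalIntegral.integral_of_le (hu.1.trans hu.2),
    integral_abs_sub_rpow hr hu]

lemma integrableOn_abs_sub_rpow_Icc_prod {r : ℝ} (hr : -1 < r) (a b : ℝ) :
    IntegrableOn (fun p : ℝ × ℝ => |p.1 - p.2| ^ r) (Icc a b ×ˢ Icc a b) := by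
  have hmeas : Measurable fun p : ℝ × ℝ => |p.1 - p.2| ^ r := by fun_prop
  rw [IntegrableOn, Measure.volume_eq_prod, ← Measure.prod_restrict,
    integrable_prod_iff hmeas.aestronglyMeasurable]
  refine ⟨ae_of_all _ fun u => ?_, ?_⟩
  · refine (integrableOn_Icc_iff_integrableOn_Ioc).2 ?_
    simpa only [abs_sub_comm u] using (intervalIntegrable_abs_sub_rpow hr u a b).1
  · have hcont : Continuous fun u : ℝ => ((u - a) ^ (r + 1) + (b - u) ^ (r + 1)) / (r + 1) := by
      fun_prop (disch := linarith)
    refine hcont.integrableOn_Icc.congr_fun (fun u hu => ?_) measurableSet_Icc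
    simp only [Real.norm_eq_abs, abs_of_nonneg (Real.rpow_nonneg (abs_nonneg _) _)]
    exact (setIntegral_Icc_abs_sub_rpow hr hu).symm

lemma setIntegral_abs_sub_rpow_Icc_prod {r : ℝ} (hr : -1 < r) {a b : ℝ} (hab : a ≤ b) :
    ∫ p in Icc a b ×ˢ Icc a b, |p.1 - p.2| ^ r =
      2 * (b - a) ^ (r + 2) / ((r + 1) * (r + 2)) := by
  have hs : -1 < r + 1 := by linarith
  rw [Measure.volume_eq_prod, setIntegral_prod _ (integrableOn_abs_sub_rpow_Icc_prod hr a b),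
    setIntegral_congr_fun measurableSet_Icc fun u hu => setIntegral_Icc_abs_sub_rpow hr hu,
    integral_Icc_eq_integral_Ioc, ← intervalIntegral.integral_of_le hab,
    intervalIntegral.integral_div, intervalIntegral.integral_add,
    integral_sub_const_rpow hs, integral_const_sub_rpow hs]
  · rw [show r + 1 + 1 = r + 2 by ring]
    field_simp
    ring
  all_goals exact (Continuous.intervalIntegrable (by fun_prop (disch := linarith)) _ _)

lemma setIntegral_mul_mem_Icc {X : Type*} [MeasurableSpace X] {μ : Measure X} {s : Set X}
    (hs : MeasurableSet s) {w g : X → ℝ} {m M : ℝ} (hw : AEStronglyMeasurable w (μ.restrict s))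
    (hwmM : ∀ x ∈ s, w x ∈ Icc m M) (hg : IntegrableOn g s μ) (hg0 : ∀ x ∈ s, 0 ≤ g x) :
    ∫ x in s, w x * g x ∂μ ∈ Icc (m * ∫ x in s, g x ∂μ) (M * ∫ x in s, g x ∂μ) := by
  have hwg : IntegrableOn (fun x => w x * g x) s μ :=
    hg.bdd_mul hw ((ae_restrict_iff' hs).2 (ae_of_all _ fun x hx =>
      abs_le_max_abs_abs (hwmM x hx).1 (hwmM x hx).2))
  rw [← integral_const_mul, ← integral_const_mul]
  exact ⟨setIntegral_mono_on (hg.const_mul m) hwg hs fun x hx =>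
      mul_le_mul_of_nonneg_right (hwmM x hx).1 (hg0 x hx),
    setIntegral_mono_on hwg (hg.const_mul M) hs fun x hx =>
      mul_le_mul_of_nonneg_right (hwmM x hx).2 (hg0 x hx)⟩

lemma exp_neg_two_mul_mul_exp_mem_Icc (α : ℝ) {t u v : ℝ} (hu : u ∈ Icc 0 t) (hv : v ∈ Icc 0 t) :
    Real.exp (-2 * α * t) * Real.exp (α * (u + v)) ∈
      Icc (Real.exp (-(2 * |α|) * t)) (Real.exp (2 * |α| * t)) := by
  obtain ⟨hu0, hut⟩ := hu
  obtain ⟨hv0, hvt⟩ := hv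
  have hx : |u + v - 2 * t| ≤ 2 * t := abs_le.2 ⟨by linarith, by linarith⟩
  have habs : |α * (u + v - 2 * t)| ≤ 2 * |α| * t := by
    rw [abs_mul]
    linarith [mul_le_mul_of_nonneg_left hx (abs_nonneg α)]
  rw [← Real.exp_add]
  constructor <;> gcongr <;> linarith [abs_le.1 habs]

noncomputable def fracOUVariance (H α t : ℝ) : ℝ :=
  H * (2 * H - 1) * Real.exp (-2 * α * t) *
    ∫ p in Icc (0:ℝ) t ×ˢ Icc (0:ℝ) t, Real.exp (α * (p.1 + p.2)) * |p.1 - p.2| ^ (2 * H - 2)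

lemma fracOUVariance_div_rpow_mem_Icc (α : ℝ) {H t : ℝ} (hH : 1 / 2 < H) (ht : 0 < t) :
    fracOUVariance H α t / t ^ (2 * H) ∈
      Icc (Real.exp (-(2 * |α|) * t)) (Real.exp (2 * |α| * t)) := by
  have hr : (-1 : ℝ) < 2 * H - 2 := by linarith
  have hC : 0 < H * (2 * H - 1) := by nlinarith
  have hmass : H * (2 * H - 1) * ∫ p in Icc (0:ℝ) t ×ˢ Icc (0:ℝ) t, |p.1 - p.2| ^ (2 * H - 2)
      = t ^ (2 * H) := by
    rw [setIntegral_abs_sub_rpow_Icc_prod hr ht.le, sub_zero,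
      show 2 * H - 2 + 2 = 2 * H by ring, show 2 * H - 2 + 1 = 2 * H - 1 by ring,
      mul_div_assoc', div_eq_iff (by nlinarith)]
    ring
  have hweighted : fracOUVariance H α t = H * (2 * H - 1) * ∫ p in Icc (0:ℝ) t ×ˢ Icc (0:ℝ) t,
      Real.exp (-2 * α * t) * Real.exp (α * (p.1 + p.2)) * |p.1 - p.2| ^ (2 * H - 2) := by
    simp only [fracOUVariance, mul_assoc, integral_const_mul]
  obtain ⟨hlo, hhi⟩ := setIntegral_mul_mem_Icc (measurableSet_Icc.prod measurableSet_Icc)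
    (by fun_prop) (fun p hp => exp_neg_two_mul_mul_exp_mem_Icc α hp.1 hp.2)
    (integrableOn_abs_sub_rpow_Icc_prod hr 0 t) (fun p _ => Real.rpow_nonneg (abs_nonneg _) _)
  have htp : 0 < t ^ (2 * H) := Real.rpow_pos_of_pos ht _
  rw [mem_Icc, le_div_iff₀ htp, div_le_iff₀ htp, hweighted, ← hmass]
  constructor <;> nlinarith [mul_le_mul_of_nonneg_left hlo hC.le,
    mul_le_mul_of_nonneg_left hhi hC.le]

theorem fractional_OU_variance_asymptotics_general
    (H α : ℝ) (hH : H ∈ Set.Ioo (1/2 : ℝ) 1)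
    (R : ℝ → ℝ)
    (hR : ∀ t, 0 < t → R t = H * (2 * H - 1) * Real.exp (-2 * α * t) *
      ∫ p in (Set.Icc (0:ℝ) t) ×ˢ (Set.Icc (0:ℝ) t),
        Real.exp (α * (p.1 + p.2)) * |p.1 - p.2| ^ (2 * H - 2)) :
    Tendsto (fun t => R t / t ^ (2 * H)) (nhdsWithin 0 (Set.Ioi 0)) (nhds 1) := by
  have hexp (c : ℝ) : Tendsto (fun t => Real.exp (c * t)) (nhdsWithin 0 (Ioi 0)) (nhds 1) := by
    simpa using ((continuous_const_mul c).rexp.tendsto 0).mono_left nhdsWithin_le_nhds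
  have hbounds : ∀ t ∈ Ioi (0:ℝ),
      R t / t ^ (2 * H) ∈ Icc (Real.exp (-(2 * |α|) * t)) (Real.exp (2 * |α| * t)) :=
    fun t ht => hR t ht ▸ fracOUVariance_div_rpow_mem_Icc α hH.1 ht
  refine tendsto_of_tendsto_of_tendsto_of_le_of_le' (hexp (-(2 * |α|))) (hexp (2 * |α|)) ?_ ?_
  exacts [eventually_nhdsWithin_of_forall fun t ht => (hbounds t ht).1,
    eventually_nhdsWithin_of_forall fun t ht => (hbounds t ht).2]

/-- Small-time behavior of the variance function of the fractional
Ornstein–Uhlenbeck process: for `H ∈ (1/2, 1)` and `α > 0`, with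
`R(t) = H(2H-1) e^{-2αt} ∫_{[0,t]²} e^{α(u+v)} |u-v|^{2H-2} du dv`,
one has `lim_{t↓0} R(t)/t^{2H} = 1`. -/
theorem fractional_OU_variance_asymptotics
    (H α : ℝ) (hH : H ∈ Set.Ioo (1/2 : ℝ) 1) (hα : 0 < α)
    (R : ℝ → ℝ)
    (hR : ∀ t, 0 < t → R t = H * (2 * H - 1) * Real.exp (-2 * α * t) *
      ∫ p in (Set.Icc (0:ℝ) t) ×ˢ (Set.Icc (0:ℝ) t),
        Real.exp (α * (p.1 + p.2)) * |p.1 - p.2| ^ (2 * H - 2)) :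
    Tendsto (fun t => R t / t ^ (2 * H)) (nhdsWithin 0 (Set.Ioi 0)) (nhds 1) :=
  fractional_OU_variance_asymptotics_general H α hH R hR
end
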